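/- If S is a countable multiplicative subset of a commutative ring R, then the projective dimension of the R-module S⁻¹R is at most 1. -/

import Mathlib

/-!
Enumerate `S` as `s₀, s₁, …` so that every element occurs infinitely often, and put
`tₙ = s₀ ⋯ sₙ₋₁`. Then `S⁻¹R` is the union of the chain `R·(1/t₀) ⊆ R·(1/t₁) ⊆ ⋯`, which
gives the free resolution
`0 → R^(ℕ) → R^(ℕ) → S⁻¹R → 0`, `eₙ ↦ eₙ - sₙ eₙ₊₁`, `eₙ ↦ 1/tₙ`.
The first map is injective by comparing coefficients from the bottom up. For exactness, modulo
its image every element is a single `a eₙ`; if `a/tₙ = 0` then `u a = 0` for some `u ∈ S`, and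
`a eₙ` moves up to a multiple of `u a eₘ₊₁ = 0` at any later index `m` with `sₘ = u`.
-/

/-- `M` has projective dimension at most 1 over `R`: some (equivalently, any) surjection
onto `M` from a free module has projective kernel. -/
def HasProjDimLEOne (R : Type) [CommRing R] (M : Type) [AddCommGroup M] [Module R M] : Prop :=
  ∃ (ι : Type) (f : (ι →₀ R) →ₗ[R] M),
    Function.Surjective f ∧ Module.Projective R (LinearMap.ker f)

open Filter Finsupp

theorem HasProjDimLEOne.of_exact {R : Type} [CommRing R] {M P : Type} [AddCommGroup M]
    [Module R M] [AddCommGroup P] [Module R P] [Module.Projective R P] {ι : Type}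
    {d : P →ₗ[R] ι →₀ R} {f : (ι →₀ R) →ₗ[R] M} (hd : Function.Injective d)
    (hf : Function.Surjective f) (hdf : LinearMap.range d = LinearMap.ker f) :
    HasProjDimLEOne R M :=
  ⟨ι, f, hf, .of_equiv' <| (LinearEquiv.ofInjective d hd).trans (.ofEq _ _ hdf)⟩

theorem exists_seq_frequently_eq (α : Type*) [Nonempty α] [Countable α] :
    ∃ s : ℕ → α, ∀ a, ∃ᶠ n in atTop, s n = a := by
  obtain ⟨g, hg⟩ := exists_surjective_nat α
  refine ⟨fun n => g n.unpair.1, fun a => frequently_atTop.2 fun N => ?_⟩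
  obtain ⟨k, rfl⟩ := hg a
  exact ⟨Nat.pair k N, Nat.right_le_pair k N, by simp⟩

section Telescope

variable {R : Type*} [Ring R] (s : ℕ → R)

noncomputable def telescope : (ℕ →₀ R) →ₗ[R] ℕ →₀ R :=
  linearCombination R fun n => single n 1 - single (n + 1) (s n)

theorem telescope_single (n : ℕ) (r : R) :
    telescope s (single n r) = single n r - single (n + 1) (r * s n) := by
  simp [telescope, smul_sub]

theorem telescope_apply_zero (x : ℕ →₀ R) : telescope s x 0 = x 0 := by
  induction x using Finsupp.induction_linear with
  | zero => simp
  | add x y hx hy => simp [hx, hy]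
  | single k r => simp [telescope_single, single_apply]

theorem telescope_apply_succ (x : ℕ →₀ R) (n : ℕ) :
    telescope s x (n + 1) = x (n + 1) - x n * s n := by
  induction x using Finsupp.induction_linear with
  | zero => simp
  | add x y hx hy => simp only [map_add, Finsupp.add_apply, hx, hy, add_mul]; abel
  | single k r =>
    rcases eq_or_ne k n with rfl | hk
    · simp [telescope_single]
    · simp [telescope_single, single_apply, hk.symm]

theorem telescope_injective : Function.Injective (telescope s) := by
  refine (injective_iff_map_eq_zero _).2 fun x hx => Finsupp.ext fun n => ?_
  induction n with
  | zero => simpa [hx] using (telescope_apply_zero s x).symm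
  | succ n ih => simpa [hx, ih] using (telescope_apply_succ s x n).symm

end Telescope

section CommTelescope

variable {R : Type*} [CommRing R] (s : ℕ → R)

theorem single_sub_single_prod_mem_range_telescope {k n : ℕ} (hkn : k ≤ n) (r : R) :
    single k r - single n (r * ∏ i ∈ Finset.Ico k n, s i) ∈ LinearMap.range (telescope s) := by
  induction n, hkn using Nat.le_induction with
  | base => simp
  | succ n hkn ih =>
    have hstep : single n (r * ∏ i ∈ Finset.Ico k n, s i) -
        single (n + 1) (r * ∏ i ∈ Finset.Ico k (n + 1), s i) ∈ LinearMap.range (telescope s) :=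
      ⟨_, by rw [telescope_single, Finset.prod_Ico_succ_top hkn, mul_assoc]⟩
    simpa using add_mem ih hstep

theorem eventually_exists_sub_single_mem_range_telescope (y : ℕ →₀ R) :
    ∀ᶠ n in atTop, ∃ a, y - single n a ∈ LinearMap.range (telescope s) := by
  induction y using Finsupp.induction_linear with
  | zero => exact .of_forall fun _ => ⟨0, by simp⟩
  | add y z hy hz =>
    filter_upwards [hy, hz] with n ⟨a, ha⟩ ⟨b, hb⟩
    exact ⟨a + b, by simpa [single_add, add_sub_add_comm] using add_mem ha hb⟩
  | single k r =>
    filter_upwards [eventually_ge_atTop k] with n hkn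
    exact ⟨_, single_sub_single_prod_mem_range_telescope s hkn r⟩

end CommTelescope

theorem Localization.mk_mul_mul_right {R : Type*} [CommRing R] {S : Submonoid R} (r : R)
    (a b : S) : Localization.mk (r * b) (a * b) = Localization.mk r a := by
  rw [← Localization.mk_mul, Localization.mk_self, mul_one]

section Localization

variable {R : Type*} [CommRing R] {S : Submonoid R} (s : ℕ → S)

noncomputable def mkPartialProd : (ℕ →₀ R) →ₗ[R] Localization S :=
  linearCombination R fun n => Localization.mk 1 (∏ i ∈ Finset.range n, s i)

theorem mkPartialProd_single (n : ℕ) (r : R) :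
    mkPartialProd s (single n r) = Localization.mk r (∏ i ∈ Finset.range n, s i) := by
  simp [mkPartialProd, Localization.smul_mk]

theorem mkPartialProd_single_succ (n : ℕ) (r : R) :
    mkPartialProd s (single (n + 1) (r * s n)) = mkPartialProd s (single n r) := by
  rw [mkPartialProd_single, mkPartialProd_single, Finset.prod_range_succ,
    Localization.mk_mul_mul_right]

theorem mkPartialProd_comp_telescope :
    (mkPartialProd s).comp (telescope fun n => (s n : R)) = 0 :=
  lhom_ext fun n r => by
    simp only [LinearMap.comp_apply, telescope_single, map_sub, mkPartialProd_single_succ,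
      sub_self, LinearMap.zero_apply]

theorem mkPartialProd_surjective (hs : Function.Surjective s) :
    Function.Surjective (mkPartialProd s) := by
  intro z
  induction z using Localization.induction_on with | H p => ?_
  obtain ⟨r, u⟩ := p
  obtain ⟨n, rfl⟩ := hs u
  refine ⟨single (n + 1) (r * ∏ i ∈ Finset.range n, (s i : R)), ?_⟩
  rw [mkPartialProd_single, Finset.prod_range_succ, ← Submonoid.coe_finsetProd,
    mul_comm (∏ i ∈ Finset.range n, s i), Localization.mk_mul_mul_right]

theorem ker_mkPartialProd_le_range_telescope (hs : ∀ u, ∃ᶠ n in atTop, s n = u) :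
    LinearMap.ker (mkPartialProd s) ≤ LinearMap.range (telescope fun n => (s n : R)) := by
  intro y hy
  obtain ⟨N, a, hya⟩ := (eventually_exists_sub_single_mem_range_telescope _ y).exists
  have hN : Localization.mk a (∏ i ∈ Finset.range N, s i) = 0 := by
    obtain ⟨x, hx⟩ := hya
    have := congr(mkPartialProd s $hx)
    rw [← LinearMap.comp_apply, mkPartialProd_comp_telescope, map_sub, hy] at this
    simpa [mkPartialProd_single, eq_comm] using this
  rw [Localization.mk_eq_mk'_apply, IsLocalization.mk'_eq_zero_iff] at hN
  obtain ⟨u, hu⟩ := hN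
  obtain ⟨m, rfl, hNm⟩ := ((hs u).and_eventually (eventually_ge_atTop N)).exists
  have hsingle := single_sub_single_prod_mem_range_telescope (fun n => (s n : R))
    (hNm.trans m.le_succ) a
  have hzero : a * ∏ i ∈ Finset.Ico N (m + 1), (s i : R) = 0 := by
    rw [Finset.prod_Ico_succ_top hNm, mul_comm, mul_assoc, hu, mul_zero]
  rw [hzero, single_zero, sub_zero] at hsingle
  simpa using add_mem hya hsingle

theorem range_telescope_eq_ker_mkPartialProd (hs : ∀ u, ∃ᶠ n in atTop, s n = u) :
    LinearMap.range (telescope fun n => (s n : R)) = LinearMap.ker (mkPartialProd s) :=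
  le_antisymm (LinearMap.range_le_ker_iff.2 (mkPartialProd_comp_telescope s))
    (ker_mkPartialProd_le_range_telescope s hs)

end Localization

theorem projDim_localization_le_one_of_countable
    (R : Type) [CommRing R] (S : Submonoid R) [Countable S] :
    HasProjDimLEOne R (Localization S) := by
  obtain ⟨s, hs⟩ := exists_seq_frequently_eq S
  exact .of_exact (telescope_injective _) (mkPartialProd_surjective s fun u => (hs u).exists)
    (range_telescope_eq_ker_mkPartialProd s hs)
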